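/- Let x and y be two variational Nash equilibria of an I-player congestion game. Suppose each u_i is α-strongly concave, each c_t is convex non-decreasing with all subgradients along feasible aggregates bounded by C, and each action set X_i is contained in the ball of radius M/I (so that aggregates are bounded by M). Then ‖x − y‖ ≤ 2M √(TC/(αI)). -/

import Mathlib

open scoped RealInnerProductSpace BigOperators

noncomputable section

def cvec {T : ℕ} (c : Fin T → ℝ → ℝ) (X : EuclideanSpace ℝ (Fin T)) :
    EuclideanSpace ℝ (Fin T) :=
  WithLp.toLp 2 (fun t => c t (X t))

def subdiff {T : ℕ} (f : EuclideanSpace ℝ (Fin T) → ℝ) (x : EuclideanSpace ℝ (Fin T)) :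
    Set (EuclideanSpace ℝ (Fin T)) :=
  {g | ∀ y, f x + ⟪g, y - x⟫ ≤ f y}

def subdiffR (f : ℝ → ℝ) (x : ℝ) : Set ℝ :=
  {a | ∀ y, f x + a * (y - x) ≤ f y}

/-- The set `H(x)` of joint subgradients for the atomic game. -/
def Hmap {I T : ℕ} (c : Fin T → ℝ → ℝ) (u : Fin I → EuclideanSpace ℝ (Fin T) → ℝ)
    (x : Fin I → EuclideanSpace ℝ (Fin T)) :
    Set (Fin I → EuclideanSpace ℝ (Fin T)) :=
  {g | ∀ i, ∃ a : Fin T → ℝ, (∀ t, a t ∈ subdiffR (c t) ((∑ j, x j) t)) ∧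
      ∃ gu ∈ subdiff (fun z => - u i z) (x i),
        g i = (cvec c (∑ j, x j) + (WithLp.equiv 2 (Fin T → ℝ)).symm (fun t => a t * x i t)) + gu}

/-- The set `H'(x)` of joint subgradients for the nonatomic game. -/
def Hmap' {I T : ℕ} (c : Fin T → ℝ → ℝ) (u : Fin I → EuclideanSpace ℝ (Fin T) → ℝ)
    (x : Fin I → EuclideanSpace ℝ (Fin T)) :
    Set (Fin I → EuclideanSpace ℝ (Fin T)) :=
  {g | ∀ i, ∃ gu ∈ subdiff (fun z => - u i z) (x i), g i = cvec c (∑ j, x j) + gu}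

/-- Variational Nash equilibrium on the coupled feasible set. -/
def isVNE {I T : ℕ} (X : Fin I → Set (EuclideanSpace ℝ (Fin T)))
    (A : Set (EuclideanSpace ℝ (Fin T))) (c : Fin T → ℝ → ℝ)
    (u : Fin I → EuclideanSpace ℝ (Fin T) → ℝ)
    (x : Fin I → EuclideanSpace ℝ (Fin T)) : Prop :=
  (∀ i, x i ∈ X i) ∧ (∑ i, x i) ∈ A ∧
    ∃ g ∈ Hmap c u x, ∀ z : Fin I → EuclideanSpace ℝ (Fin T),
      (∀ i, z i ∈ X i) → (∑ i, z i) ∈ A → 0 ≤ ∑ i, ⟪g i, z i - x i⟫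

/-- Symmetric variational Wardrop equilibrium on the coupled feasible set. -/
def isSVWE {I T : ℕ} (X : Fin I → Set (EuclideanSpace ℝ (Fin T)))
    (A : Set (EuclideanSpace ℝ (Fin T))) (c : Fin T → ℝ → ℝ)
    (u : Fin I → EuclideanSpace ℝ (Fin T) → ℝ)
    (x : Fin I → EuclideanSpace ℝ (Fin T)) : Prop :=
  (∀ i, x i ∈ X i) ∧ (∑ i, x i) ∈ A ∧
    ∃ g ∈ Hmap' c u x, ∀ z : Fin I → EuclideanSpace ℝ (Fin T),
      (∀ i, z i ∈ X i) → (∑ i, z i) ∈ A → 0 ≤ ∑ i, ⟪g i, z i - x i⟫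

/-!
Adding the variational inequalities of the two equilibria, each tested at the other one, gives
`∑ i, ⟪g i - h i, x i - y i⟫ ≤ 0`. Each subgradient splits into three parts. The congestion part
`c(X)` is common to all players and contributes `⟪c(X) - c(Y), X - Y⟫ ≥ 0` since the `c t` are
non-decreasing. The utility part contributes at least `α ‖x i - y i‖²` by strong concavity. The
atomic part `a_{i,t} x_{i,t}` is small: all its coordinates are bounded by `C M / I`, so it
costs at most `4 T C M² / I²` per player. Hence `α ∑ i, ‖x i - y i‖² ≤ 4 T C M² / I`.
-/

open Filter Topology

section StrongConvexity

variable {E : Type*} [NormedAddCommGroup E] [InnerProductSpace ℝ E] {f : E → ℝ} {m : ℝ}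

lemma add_le_of_forall_add_one_sub_mul_le {a b k : ℝ}
    (h : ∀ l ∈ Set.Ioc (0 : ℝ) 1, a + (1 - l) * k ≤ b) : a + k ≤ b := by
  have hlim : Tendsto (fun l : ℝ => a + (1 - l) * k) (𝓝[>] 0) (𝓝 (a + k)) := by
    have : Tendsto (fun l : ℝ => a + (1 - l) * k) (𝓝 0) (𝓝 (a + (1 - 0) * k)) :=
      (continuous_const.add ((continuous_const.sub continuous_id).mul continuous_const)).tendsto 0
    simpa using this.mono_left nhdsWithin_le_nhds
  exact le_of_tendsto hlim (eventually_of_mem (Ioc_mem_nhdsGT one_pos) h)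

theorem StrongConvexOn.add_inner_add_le_of_subgradient (hf : StrongConvexOn Set.univ m f)
    {x g : E} (hg : ∀ y, f x + ⟪g, y - x⟫ ≤ f y) (z : E) :
    f x + ⟪g, z - x⟫ + m / 2 * ‖z - x‖ ^ 2 ≤ f z := by
  refine add_le_of_forall_add_one_sub_mul_le fun l ⟨hl0, hl1⟩ => ?_
  have hsub : f x + l * ⟪g, z - x⟫ ≤ f ((1 - l) • x + l • z) := by
    have := hg ((1 - l) • x + l • z)
    rwa [show (1 - l) • x + l • z - x = l • (z - x) by module, real_inner_smul_right] at this
  have hconv := hf.2 (Set.mem_univ x) (Set.mem_univ z) (sub_nonneg.2 hl1) hl0.le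
    (sub_add_cancel 1 l)
  rw [smul_eq_mul, smul_eq_mul, norm_sub_rev] at hconv
  have : l * (f x + ⟪g, z - x⟫ + (1 - l) * (m / 2 * ‖z - x‖ ^ 2)) ≤ l * f z := by linarith
  exact le_of_mul_le_mul_left this hl0

theorem StrongConvexOn.mul_sq_norm_le_inner_sub_of_subgradient (hf : StrongConvexOn Set.univ m f)
    {x y g h : E} (hg : ∀ z, f x + ⟪g, z - x⟫ ≤ f z) (hh : ∀ z, f y + ⟪h, z - y⟫ ≤ f z) :
    m * ‖x - y‖ ^ 2 ≤ ⟪g - h, x - y⟫ := by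
  have hgy := hf.add_inner_add_le_of_subgradient hg y
  have hhx := hf.add_inner_add_le_of_subgradient hh x
  rw [norm_sub_rev, ← neg_sub x y, inner_neg_right] at hgy
  rw [inner_sub_left]
  linarith

end StrongConvexity

theorem sum_inner_sub_nonpos_of_variational {ι E : Type*} [Fintype ι] [NormedAddCommGroup E]
    [InnerProductSpace ℝ E] {x y g h : ι → E} (hg : 0 ≤ ∑ i, ⟪g i, y i - x i⟫)
    (hh : 0 ≤ ∑ i, ⟪h i, x i - y i⟫) :
    ∑ i, ⟪g i - h i, x i - y i⟫ ≤ 0 := by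
  have hsplit : ∀ i, ⟪g i - h i, x i - y i⟫ = -⟪g i, y i - x i⟫ - ⟪h i, x i - y i⟫ := by
    intro i
    rw [inner_sub_left, ← neg_sub (y i) (x i), inner_neg_right]
  rw [Finset.sum_congr rfl fun i _ => hsplit i, Finset.sum_sub_distrib, Finset.sum_neg_distrib]
  linarith

section CongestionGame

variable {I T : ℕ}

lemma EuclideanSpace.real_inner_eq_sum (v w : EuclideanSpace ℝ (Fin T)) :
    ⟪v, w⟫ = ∑ t, v t * w t := by
  simp [PiLp.inner_apply, mul_comm]

lemma inner_cvec_sub_nonneg {c : Fin T → ℝ → ℝ} (hc : ∀ t, Monotone (c t))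
    (X Y : EuclideanSpace ℝ (Fin T)) : 0 ≤ ⟪cvec c X - cvec c Y, X - Y⟫ := by
  rw [EuclideanSpace.real_inner_eq_sum]
  exact Finset.sum_nonneg fun t _ => (monovary_id_iff.2 (hc t)).sub_mul_sub_nonneg (Y t) (X t)

lemma abs_mul_sub_mul_mul_sub_le {a b p q C R : ℝ} (ha : |a| ≤ C) (hb : |b| ≤ C) (hp : |p| ≤ R)
    (hq : |q| ≤ R) : |(a * p - b * q) * (p - q)| ≤ 4 * C * R ^ 2 := by
  have hC : 0 ≤ C := (abs_nonneg a).trans ha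
  have hR : 0 ≤ R := (abs_nonneg p).trans hp
  have hfirst : |a * p - b * q| ≤ 2 * C * R := by
    calc |a * p - b * q| ≤ |a| * |p| + |b| * |q| := by
          rw [← abs_mul, ← abs_mul]; exact abs_sub _ _
      _ ≤ C * R + C * R := by gcongr
      _ = 2 * C * R := by ring
  have hsecond : |p - q| ≤ 2 * R := by linarith [abs_sub p q]
  calc |(a * p - b * q) * (p - q)| = |a * p - b * q| * |p - q| := abs_mul _ _
    _ ≤ 2 * C * R * (2 * R) := by gcongr
    _ = 4 * C * R ^ 2 := by ring

lemma neg_le_inner_atomic_sub {a b : Fin T → ℝ} {p q : EuclideanSpace ℝ (Fin T)} {C R : ℝ}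
    (ha : ∀ t, |a t| ≤ C) (hb : ∀ t, |b t| ≤ C) (hp : ‖p‖ ≤ R) (hq : ‖q‖ ≤ R) :
    -(T * (4 * C * R ^ 2)) ≤
      ⟪(WithLp.equiv 2 (Fin T → ℝ)).symm (fun t => a t * p t) -
        (WithLp.equiv 2 (Fin T → ℝ)).symm (fun t => b t * q t), p - q⟫ := by
  have hcoord : ∀ (v : EuclideanSpace ℝ (Fin T)) t, ‖v‖ ≤ R → |v t| ≤ R := fun v t hv =>
    (Real.norm_eq_abs (v t) ▸ PiLp.norm_apply_le v t).trans hv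
  rw [EuclideanSpace.real_inner_eq_sum]
  calc -(T * (4 * C * R ^ 2)) = ∑ _t : Fin T, -(4 * C * R ^ 2) := by simp
    _ ≤ _ := Finset.sum_le_sum fun t _ => (neg_abs_le _).trans' <| neg_le_neg <|
        abs_mul_sub_mul_mul_sub_le (ha t) (hb t) (hcoord p t hp) (hcoord q t hq)

theorem sub_le_sum_inner_of_mem_Hmap {c : Fin T → ℝ → ℝ} {u : Fin I → EuclideanSpace ℝ (Fin T) → ℝ}
    {α C R : ℝ} {x y g h : Fin I → EuclideanSpace ℝ (Fin T)} (hc : ∀ t, Monotone (c t))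
    (hu : ∀ i, StrongConvexOn Set.univ α fun z => -u i z)
    (hxR : ∀ i, ‖x i‖ ≤ R) (hyR : ∀ i, ‖y i‖ ≤ R)
    (hxC : ∀ t, ∀ a ∈ subdiffR (c t) ((∑ i, x i) t), |a| ≤ C)
    (hyC : ∀ t, ∀ b ∈ subdiffR (c t) ((∑ i, y i) t), |b| ≤ C)
    (hg : g ∈ Hmap c u x) (hh : h ∈ Hmap c u y) :
    α * ∑ i, ‖x i - y i‖ ^ 2 - I * (T * (4 * C * R ^ 2)) ≤ ∑ i, ⟪g i - h i, x i - y i⟫ := by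
  choose a ha ux hux hg using hg
  choose b hb uy huy hh using hh
  have hsplit : ∀ i, ⟪g i - h i, x i - y i⟫ =
      ⟪cvec c (∑ j, x j) - cvec c (∑ j, y j), x i - y i⟫ +
      ⟪(WithLp.equiv 2 (Fin T → ℝ)).symm (fun t => a i t * x i t) -
        (WithLp.equiv 2 (Fin T → ℝ)).symm (fun t => b i t * y i t), x i - y i⟫ +
      ⟪ux i - uy i, x i - y i⟫ := by
    intro i
    rw [hg i, hh i]
    simp only [inner_sub_left, inner_add_left]
    ring
  have hcongestion : 0 ≤ ∑ i, ⟪cvec c (∑ j, x j) - cvec c (∑ j, y j), x i - y i⟫ := by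
    rw [← inner_sum, Finset.sum_sub_distrib]
    exact inner_cvec_sub_nonneg hc _ _
  have hatomic := Finset.sum_le_sum fun i (_ : i ∈ Finset.univ) =>
    neg_le_inner_atomic_sub (fun t => hxC t _ (ha i t)) (fun t => hyC t _ (hb i t)) (hxR i) (hyR i)
  have hutility := Finset.sum_le_sum fun i (_ : i ∈ Finset.univ) =>
    (hu i).mul_sq_norm_le_inner_sub_of_subgradient (hux i) (huy i)
  rw [Finset.sum_const, Finset.card_univ, Fintype.card_fin, nsmul_eq_mul] at hatomic
  rw [Finset.sum_congr rfl fun i _ => hsplit i, Finset.sum_add_distrib, Finset.sum_add_distrib]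
  rw [Finset.mul_sum]
  linarith

end CongestionGame

theorem VNEs_close_strong_concavity_general {I T : ℕ} (hI : 0 < I)
    (X : Fin I → Set (EuclideanSpace ℝ (Fin T)))
    (A : Set (EuclideanSpace ℝ (Fin T)))
    (c : Fin T → ℝ → ℝ)
    (hcmono : ∀ t, Monotone (c t))
    (u : Fin I → EuclideanSpace ℝ (Fin T) → ℝ)
    (α : ℝ) (hα : 0 < α)
    (hstrong : ∀ i, ConvexOn ℝ Set.univ (fun z => - u i z - (α / 2) * ‖z‖ ^ 2))
    (M C : ℝ)
    (hM : ∀ i, ∀ v ∈ X i, ‖v‖ ≤ M / I)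
    (hC : ∀ z : Fin I → EuclideanSpace ℝ (Fin T), (∀ i, z i ∈ X i) →
      ∀ t, ∀ a ∈ subdiffR (c t) ((∑ i, z i) t), |a| ≤ C)
    (x y : Fin I → EuclideanSpace ℝ (Fin T))
    (hx : isVNE X A c u x) (hy : isVNE X A c u y) :
    Real.sqrt (∑ i, ‖x i - y i‖ ^ 2) ≤ 2 * M * Real.sqrt (T * C / (α * I)) := by
  obtain ⟨hxX, hxA, g, hg, hgVI⟩ := hx
  obtain ⟨hyX, hyA, h, hh, hhVI⟩ := hy
  have hIpos : (0 : ℝ) < I := Nat.cast_pos.2 hI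
  have hM0 : 0 ≤ M := by
    have := (norm_nonneg _).trans (hM ⟨0, hI⟩ _ (hxX ⟨0, hI⟩))
    rwa [le_div_iff₀ hIpos, zero_mul] at this
  have hequilibria := sum_inner_sub_nonpos_of_variational (hgVI y hyX hyA) (hhVI x hxX hxA)
  have hlower := sub_le_sum_inner_of_mem_Hmap hcmono
    (fun i => strongConvexOn_iff_convex.2 (hstrong i)) (fun i => hM i _ (hxX i))
    (fun i => hM i _ (hyX i)) (hC x hxX) (hC y hyX) hg hh
  have hsq : ∑ i, ‖x i - y i‖ ^ 2 ≤ (2 * M) ^ 2 * (T * C / (α * I)) := by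
    have hconst : I * (T * (4 * C * (M / I) ^ 2)) = α * ((2 * M) ^ 2 * (T * C / (α * I))) := by
      field_simp
      ring
    exact le_of_mul_le_mul_left (by linarith) hα
  calc Real.sqrt (∑ i, ‖x i - y i‖ ^ 2) ≤ Real.sqrt ((2 * M) ^ 2 * (T * C / (α * I))) :=
        Real.sqrt_le_sqrt hsq
    _ = 2 * M * Real.sqrt (T * C / (α * I)) := by
        rw [Real.sqrt_mul (by positivity), Real.sqrt_sq (by linarith)]

/-- Two VNEs of a large congestion game with strongly concave utilities are close. -/
theorem VNEs_close_strong_concavity {I T : ℕ} (hI : 0 < I)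
    (X : Fin I → Set (EuclideanSpace ℝ (Fin T)))
    (hXconv : ∀ i, Convex ℝ (X i)) (hXcpt : ∀ i, IsCompact (X i))
    (A : Set (EuclideanSpace ℝ (Fin T))) (hAconv : Convex ℝ A) (hAcl : IsClosed A)
    (c : Fin T → ℝ → ℝ) (hcconv : ∀ t, ConvexOn ℝ Set.univ (c t))
    (hcmono : ∀ t, Monotone (c t)) (hccont : ∀ t, Continuous (c t))
    (u : Fin I → EuclideanSpace ℝ (Fin T) → ℝ) (hucont : ∀ i, Continuous (u i))
    (α : ℝ) (hα : 0 < α)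
    (hstrong : ∀ i, ConvexOn ℝ Set.univ (fun z => - u i z - (α / 2) * ‖z‖ ^ 2))
    (M C : ℝ)
    (hM : ∀ i, ∀ v ∈ X i, ‖v‖ ≤ M / I)
    (hC : ∀ z : Fin I → EuclideanSpace ℝ (Fin T), (∀ i, z i ∈ X i) →
      ∀ t, ∀ a ∈ subdiffR (c t) ((∑ i, z i) t), |a| ≤ C)
    (x y : Fin I → EuclideanSpace ℝ (Fin T))
    (hx : isVNE X A c u x) (hy : isVNE X A c u y) :
    Real.sqrt (∑ i, ‖x i - y i‖ ^ 2) ≤ 2 * M * Real.sqrt (T * C / (α * I)) :=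
  VNEs_close_strong_concavity_general hI X A c hcmono u α hα hstrong M C hM hC x y hx hy
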